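/- Suppose every node v ∈ V satisfies W_v < 1+ε, and every node at level ℓ(v) > 0 satisfies W_v ≥ 1−ε, where W_v = Σ_{u∈N_v} (1+ε)^{-max(ℓ(u),ℓ(v))}. Then the set V* = { v ∈ V : W_v ≥ 1−ε } is a vertex cover of G, i.e., every edge of G has at least one endpoint in V*. -/

import Mathlib

/-! An edge between two vertices of level `0` contributes `r ^ 0 = 1` to the weight of each
endpoint, so a vertex of level `0` with a neighbour of level `0` has weight at least `1 > 1 - ε`;
every other edge has an endpoint of positive level, which is heavy by assumption. -/

theorem SimpleGraph.one_le_sum_pow_max_of_adj_of_level_eq_zero {V R : Type*} [Fintype V]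
    [Semiring R] [PartialOrder R] [IsOrderedRing R] (G : SimpleGraph V) [DecidableRel G.Adj]
    {r : R} (hr : 0 ≤ r) (ℓ : V → ℕ) {x y : V} (hxy : G.Adj x y) (hx : ℓ x = 0) (hy : ℓ y = 0) :
    1 ≤ ∑ u ∈ G.neighborFinset x, r ^ max (ℓ u) (ℓ x) := by
  calc (1 : R) = r ^ max (ℓ y) (ℓ x) := by simp [hx, hy]
    _ ≤ ∑ u ∈ G.neighborFinset x, r ^ max (ℓ u) (ℓ x) :=
      Finset.single_le_sum (f := fun u => r ^ max (ℓ u) (ℓ x)) (fun _ _ => pow_nonneg hr _)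
        ((G.mem_neighborFinset x y).2 hxy)

theorem heavy_nodes_form_vertex_cover_general {V : Type*} [Fintype V]
    (G : SimpleGraph V) [DecidableRel G.Adj]
    (ε : ℝ) (hε0 : 0 < ε) (ℓ : V → ℕ)
    (W : V → ℝ)
    (hW : ∀ v, W v = ∑ u ∈ G.neighborFinset v, ((1 + ε)⁻¹) ^ (max (ℓ u) (ℓ v)))
    (hlb : ∀ v, 0 < ℓ v → 1 - ε ≤ W v) :
    ∀ x y, G.Adj x y → 1 - ε ≤ W x ∨ 1 - ε ≤ W y := by
  intro x y hxy
  rcases Nat.eq_zero_or_pos (ℓ x) with hx | hx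
  · rcases Nat.eq_zero_or_pos (ℓ y) with hy | hy
    · have hWx : 1 ≤ W x := hW x ▸
        G.one_le_sum_pow_max_of_adj_of_level_eq_zero (by positivity) ℓ hxy hx hy
      exact Or.inl (by linarith)
    · exact Or.inr (hlb y hy)
  · exact Or.inl (hlb x hx)

theorem heavy_nodes_form_vertex_cover {V : Type*} [Fintype V] [DecidableEq V]
    (G : SimpleGraph V) [DecidableRel G.Adj]
    (ε : ℝ) (hε0 : 0 < ε) (hε1 : ε < 1) (ℓ : V → ℕ)
    (W : V → ℝ)
    (hW : ∀ v, W v = ∑ u ∈ G.neighborFinset v, ((1 + ε)⁻¹) ^ (max (ℓ u) (ℓ v)))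
    (hub : ∀ v, W v < 1 + ε)
    (hlb : ∀ v, 0 < ℓ v → 1 - ε ≤ W v) :
    ∀ x y, G.Adj x y → 1 - ε ≤ W x ∨ 1 - ε ≤ W y :=
  heavy_nodes_form_vertex_cover_general G ε hε0 ℓ W hW hlb
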